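/- Let c: X×U → ℝ be nonnegative, measurable and bounded, Q a fixed channel, and for a prior P̃ let γ̃* be an optimal (or ε-optimal) policy for prior P̃. Then applying γ̃* to the true prior P incurs a mismatch loss bounded by |J(P,Q,γ̃*) − J*(P,Q)| ≤ 2‖c‖_∞ ‖P − P̃‖_TV (up to 2ε for ε-optimal policies). -/

import Mathlib

open MeasureTheory ProbabilityTheory Filter

/-- Total variation distance (factor-2 convention). -/
noncomputable def tvDist {α : Type*} [MeasurableSpace α] (μ ν : Measure α) : ℝ :=
  2 * ⨆ B : {B : Set α // MeasurableSet B}, |(μ B.1).toReal - (ν B.1).toReal|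

/-- The expected cost of a policy. -/
noncomputable def Jcost {X Y U : Type*} [MeasurableSpace X] [MeasurableSpace Y]
    [MeasurableSpace U] (c : X → U → ℝ) (Q : Kernel X Y) (P : Measure X) (γ : Y → U) : ℝ :=
  ∫ p, c p.1 (γ p.2) ∂(P ⊗ₘ Q)

/-- The single-stage optimal cost. -/
noncomputable def Jstar {X Y U : Type*} [MeasurableSpace X] [MeasurableSpace Y]
    [MeasurableSpace U] (c : X → U → ℝ) (Q : Kernel X Y) (P : Measure X) : ℝ :=
  ⨅ γ : {γ : Y → U // Measurable γ}, Jcost c Q P γ.1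

/-!
Under the prior `P`, a measurable policy `γ` has cost `∫ f_γ dP` with
`f_γ x = ∫ c(x, γ y) Q(dy | x)`, a measurable function bounded by `‖c‖_∞`. Against a Hahn
decomposition of `P - P̃` such integrals move by at most `‖c‖_∞ ‖P - P̃‖_TV` when the prior
changes, uniformly in `γ`; hence so do the optimal costs. Comparing `γ̃` first with its cost
under `P̃`, then with `J*(P̃)` and finally with `J*(P)` gives the bound.
-/

open Set

section TotalVariation

variable {α : Type*} [MeasurableSpace α] {μ ν : Measure α}

lemma two_mul_abs_measureReal_sub_le_tvDist [IsFiniteMeasure μ] [IsFiniteMeasure ν]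
    {B : Set α} (hB : MeasurableSet B) :
    2 * |μ.real B - ν.real B| ≤ tvDist μ ν := by
  have hbdd : BddAbove (range fun B : {B : Set α // MeasurableSet B} =>
      |(μ B.1).toReal - (ν B.1).toReal|) := by
    refine ⟨μ.real univ + ν.real univ, ?_⟩
    rintro _ ⟨B, rfl⟩
    have hμ : μ.real B.1 ≤ μ.real univ := measureReal_mono (subset_univ _)
    have hν : ν.real B.1 ≤ ν.real univ := measureReal_mono (subset_univ _)
    change |μ.real B.1 - ν.real B.1| ≤ _
    exact abs_sub_le_iff.2 ⟨by linarith [measureReal_nonneg (μ := ν) (s := B.1)],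
      by linarith [measureReal_nonneg (μ := μ) (s := B.1)]⟩
  unfold tvDist
  gcongr
  exact le_ciSup hbdd ⟨B, hB⟩

lemma MeasureTheory.Measure.restrict_le_restrict_of_forall_subset {s : Set α} (hs : MeasurableSet s)
    (h : ∀ t, MeasurableSet t → t ⊆ s → ν t ≤ μ t) : ν.restrict s ≤ μ.restrict s := by
  refine Measure.le_iff.2 fun t ht => ?_
  rw [Measure.restrict_apply ht, Measure.restrict_apply ht]
  exact h _ (ht.inter hs) inter_subset_right

lemma abs_integral_sub_integral_le_of_le [IsFiniteMeasure μ] (hνμ : ν ≤ μ) {f : α → ℝ}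
    (hf : Measurable f) {M : ℝ} (hfM : ∀ x, |f x| ≤ M) :
    |∫ x, f x ∂μ - ∫ x, f x ∂ν| ≤ M * (μ.real univ - ν.real univ) := by
  have : IsFiniteMeasure ν := isFiniteMeasure_of_le μ hνμ
  have hint : ∀ (ρ : Measure α) [IsFiniteMeasure ρ], Integrable f ρ := fun ρ _ =>
    .of_bound hf.aestronglyMeasurable M (ae_of_all _ hfM)
  have hsplit : ∫ x, f x ∂μ - ∫ x, f x ∂ν = ∫ x, f x ∂(μ - ν) := by
    conv_lhs => rw [← Measure.sub_add_cancel_of_le hνμ]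
    rw [integral_add_measure (hint _) (hint _), add_sub_cancel_right]
  calc |∫ x, f x ∂μ - ∫ x, f x ∂ν|
      ≤ M * (μ - ν).real univ := by
        rw [hsplit, ← Real.norm_eq_abs]
        exact norm_integral_le_of_norm_le_const (ae_of_all _ hfM)
    _ = M * (μ.real univ - ν.real univ) := by
      rw [measureReal_def, Measure.sub_apply MeasurableSet.univ hνμ,
        ENNReal.toReal_sub_of_le (hνμ univ) (measure_ne_top _ _)]
      rfl

theorem abs_integral_sub_integral_le_mul_tvDist [IsFiniteMeasure μ] [IsFiniteMeasure ν]
    {f : α → ℝ} (hf : Measurable f) {M : ℝ} (hfM : ∀ x, |f x| ≤ M) :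
    |∫ x, f x ∂μ - ∫ x, f x ∂ν| ≤ M * tvDist μ ν := by
  rcases isEmpty_or_nonempty α with hα | ⟨⟨x₀⟩⟩
  · simp [Measure.eq_zero_of_isEmpty μ, Measure.eq_zero_of_isEmpty ν, tvDist]
  have hM : 0 ≤ M := (abs_nonneg _).trans (hfM x₀)
  have hint : ∀ (ρ : Measure α) [IsFiniteMeasure ρ], Integrable f ρ := fun ρ _ =>
    .of_bound hf.aestronglyMeasurable M (ae_of_all _ hfM)
  obtain ⟨s, hs, hνμ, hμν⟩ := hahn_decomposition μ ν
  have hon_s := abs_integral_sub_integral_le_of_le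
    (Measure.restrict_le_restrict_of_forall_subset hs hνμ) hf hfM
  have hon_sc := abs_integral_sub_integral_le_of_le
    (Measure.restrict_le_restrict_of_forall_subset hs.compl hμν) hf hfM
  simp only [measureReal_restrict_apply_univ] at hon_s hon_sc
  have htv_s := two_mul_abs_measureReal_sub_le_tvDist (μ := μ) (ν := ν) hs
  have htv_sc := two_mul_abs_measureReal_sub_le_tvDist (μ := μ) (ν := ν) hs.compl
  calc |∫ x, f x ∂μ - ∫ x, f x ∂ν|
      = |(∫ x in s, f x ∂μ - ∫ x in s, f x ∂ν) - (∫ x in sᶜ, f x ∂ν - ∫ x in sᶜ, f x ∂μ)| := by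
        rw [← integral_add_compl hs (hint μ), ← integral_add_compl hs (hint ν)]
        ring_nf
    _ ≤ M * (μ.real s - ν.real s) + M * (ν.real sᶜ - μ.real sᶜ) :=
        (abs_sub _ _).trans (add_le_add hon_s hon_sc)
    _ ≤ M * tvDist μ ν := by
        rw [← mul_add]
        refine mul_le_mul_of_nonneg_left ?_ hM
        rw [abs_sub_comm] at htv_sc
        linarith [le_abs_self (μ.real s - ν.real s), le_abs_self (ν.real sᶜ - μ.real sᶜ)]

end TotalVariation

lemma abs_ciInf_sub_ciInf_le {ι : Type*} [Nonempty ι] {f g : ι → ℝ} {D : ℝ}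
    (hf : BddBelow (range f)) (hg : BddBelow (range g)) (h : ∀ i, |f i - g i| ≤ D) :
    |(⨅ i, f i) - ⨅ i, g i| ≤ D := by
  rw [abs_sub_le_iff, sub_le_comm, sub_le_comm (a := ⨅ i, g i)]
  exact ⟨le_ciInf fun i => by linarith [ciInf_le hf i, (abs_le.1 (h i)).2],
    le_ciInf fun i => by linarith [ciInf_le hg i, (abs_le.1 (h i)).1]⟩

section Cost

variable {X Y U : Type*} [MeasurableSpace X] [MeasurableSpace Y] [MeasurableSpace U]
  {c : X → U → ℝ} {M : ℝ} {Q : Kernel X Y} {γ : Y → U}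

lemma measurable_cost_policy (hc : Measurable (Function.uncurry c)) (hγ : Measurable γ) :
    Measurable fun p : X × Y => c p.1 (γ p.2) :=
  hc.comp (measurable_fst.prodMk (hγ.comp measurable_snd))

lemma Jcost_eq_integral_integral (hc : Measurable (Function.uncurry c))
    (hcM : ∀ x u, |c x u| ≤ M) (hγ : Measurable γ) (P : Measure X) [IsFiniteMeasure P]
    [IsFiniteKernel Q] :
    Jcost c Q P γ = ∫ x, ∫ y, c x (γ y) ∂Q x ∂P :=
  Measure.integral_compProd <| .of_bound (measurable_cost_policy hc hγ).aestronglyMeasurable M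
    (ae_of_all _ fun _ => hcM _ _)

lemma abs_Jcost_sub_Jcost_le [IsMarkovKernel Q] (hc : Measurable (Function.uncurry c))
    (hcM : ∀ x u, |c x u| ≤ M) (hγ : Measurable γ) (P P' : Measure X) [IsFiniteMeasure P]
    [IsFiniteMeasure P'] :
    |Jcost c Q P γ - Jcost c Q P' γ| ≤ M * tvDist P P' := by
  rw [Jcost_eq_integral_integral hc hcM hγ, Jcost_eq_integral_integral hc hcM hγ]
  refine abs_integral_sub_integral_le_mul_tvDist ?_ fun x => ?_
  · exact (measurable_cost_policy hc hγ).stronglyMeasurable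
      |>.integral_kernel_prod_right (f := fun x y => c x (γ y)) |>.measurable
  · simpa using norm_integral_le_of_norm_le_const (μ := Q x) (f := fun y => c x (γ y))
      (ae_of_all _ fun y => hcM x (γ y))

lemma bddBelow_range_Jcost (hcM : ∀ x u, |c x u| ≤ M) (P : Measure X) [IsFiniteMeasure P]
    [IsFiniteKernel Q] :
    BddBelow (range fun γ : {γ : Y → U // Measurable γ} => Jcost c Q P γ.1) := by
  refine ⟨-(M * (P ⊗ₘ Q).real univ), ?_⟩
  rintro _ ⟨γ, rfl⟩
  exact neg_le_of_abs_le <| (Real.norm_eq_abs _).symm.trans_le <|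
    norm_integral_le_of_norm_le_const (ae_of_all _ fun _ => hcM _ _)

lemma Jstar_le_Jcost (hcM : ∀ x u, |c x u| ≤ M) (hγ : Measurable γ) (P : Measure X)
    [IsFiniteMeasure P] [IsFiniteKernel Q] :
    Jstar c Q P ≤ Jcost c Q P γ :=
  ciInf_le (bddBelow_range_Jcost hcM P) ⟨γ, hγ⟩

lemma abs_Jstar_sub_Jstar_le [IsMarkovKernel Q] [Nonempty {γ : Y → U // Measurable γ}]
    (hc : Measurable (Function.uncurry c)) (hcM : ∀ x u, |c x u| ≤ M) (P P' : Measure X)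
    [IsFiniteMeasure P] [IsFiniteMeasure P'] :
    |Jstar c Q P - Jstar c Q P'| ≤ M * tvDist P P' := by
  unfold Jstar
  exact abs_ciInf_sub_ciInf_le (bddBelow_range_Jcost (Q := Q) hcM P) (bddBelow_range_Jcost hcM P')
    fun γ => abs_Jcost_sub_Jcost_le hc hcM γ.2 P P'

end Cost

theorem robustness_mismatch_bound_general
    {X Y U : Type*} [MeasurableSpace X] [MeasurableSpace Y] [MeasurableSpace U]
    (c : X → U → ℝ) (hc : Measurable (Function.uncurry c))
    (M : ℝ) (hcM : ∀ x u, |c x u| ≤ M)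
    (Q : Kernel X Y) [IsMarkovKernel Q]
    (P Pt : Measure X) [IsProbabilityMeasure P] [IsProbabilityMeasure Pt]
    (ε : ℝ)
    (γt : Y → U) (hγt : Measurable γt)
    (hopt : Jcost c Q Pt γt ≤ Jstar c Q Pt + ε) :
    |Jcost c Q P γt - Jstar c Q P| ≤ 2 * M * tvDist P Pt + 2 * ε := by
  have : Nonempty {γ : Y → U // Measurable γ} := ⟨⟨γt, hγt⟩⟩
  have hcost := abs_le.1 (abs_Jcost_sub_Jcost_le (Q := Q) hc hcM hγt P Pt)
  have hstar := abs_le.1 (abs_Jstar_sub_Jstar_le (Q := Q) hc hcM P Pt)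
  have hP := Jstar_le_Jcost (Q := Q) hcM hγt P
  have hPt := Jstar_le_Jcost (Q := Q) hcM hγt Pt
  rw [abs_of_nonneg (sub_nonneg.2 hP)]
  linarith

/-- Mismatch bound: if `γ̃` is an ε-optimal policy designed for the (incorrect) prior `P̃`,
then applying it to the true prior `P` incurs a loss of at most
`2‖c‖_∞ ‖P − P̃‖_TV + 2ε`. -/
theorem robustness_mismatch_bound
    {X Y U : Type*} [MeasurableSpace X] [MeasurableSpace Y] [MeasurableSpace U] [Nonempty U]
    (c : X → U → ℝ) (hc : Measurable (Function.uncurry c))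
    (hc0 : ∀ x u, 0 ≤ c x u) (M : ℝ) (hcM : ∀ x u, |c x u| ≤ M)
    (Q : Kernel X Y) [IsMarkovKernel Q]
    (P Pt : Measure X) [IsProbabilityMeasure P] [IsProbabilityMeasure Pt]
    (ε : ℝ) (hε : 0 ≤ ε)
    (γt : Y → U) (hγt : Measurable γt)
    (hopt : Jcost c Q Pt γt ≤ Jstar c Q Pt + ε) :
    |Jcost c Q P γt - Jstar c Q P| ≤ 2 * M * tvDist P Pt + 2 * ε :=
  robustness_mismatch_bound_general c hc M hcM Q P Pt ε γt hγt hopt
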